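/- arXiv:1503.06665 — 2 statements merged into one kernel-verified Lean document; each statement's English description precedes it below -/
import Mathlib

section
/- If an allocation w is envy-free and Pareto optimal with respect to the true valuations (a, b), and w* is any allocation that is equitable with respect to (a, b), then the social welfare satisfies u_a(w) + u_b(w) ≥ (3/4) · (u_a(w*) + u_b(w*)). -/
open Finset

/-- A valuation vector: positive entries summing to 1. -/
def IsValuation {m : ℕ} (v : Fin m → ℝ) : Prop :=
  (∀ i, 0 < v i) ∧ ∑ i, v i = 1

/-- An allocation: Alice receives fraction `w i ∈ [0,1]` of item `i`. -/
def IsAlloc {m : ℕ} (w : Fin m → ℝ) : Prop :=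
  ∀ i, 0 ≤ w i ∧ w i ≤ 1

/-- Alice's utility. -/
def uA {m : ℕ} (a w : Fin m → ℝ) : ℝ := ∑ i, a i * w i

/-- Bob's utility. -/
def uB {m : ℕ} (b w : Fin m → ℝ) : ℝ := ∑ i, b i * (1 - w i)

/-- Pareto optimality with respect to true valuations `(a, b)`. -/
def ParetoOptimal {m : ℕ} (a b w : Fin m → ℝ) : Prop :=
  ¬ ∃ w' : Fin m → ℝ, IsAlloc w' ∧ uA a w ≤ uA a w' ∧ uB b w ≤ uB b w' ∧
      (uA a w < uA a w' ∨ uB b w < uB b w')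

/-- Equitable allocation: both players obtain equal utility. -/
def Equitable {m : ℕ} (a b w : Fin m → ℝ) : Prop := uA a w = uB b w

/-- At most one item is split. -/
def MinimallyFractional {m : ℕ} (w : Fin m → ℝ) : Prop :=
  ∃ i₀ : Fin m, ∀ i, i ≠ i₀ → w i = 0 ∨ w i = 1

/-- Ordered allocation with respect to `(a, b)`: items sorted by decreasing ratio
`a i / b i` (cross-multiplied) and a boundary line at item `l` split in fraction `λ`. -/
def Ordered {m : ℕ} (a b w : Fin m → ℝ) : Prop :=
  ∃ π : Equiv.Perm (Fin m),
    (∀ i j : Fin m, i < j → a (π j) * b (π i) ≤ a (π i) * b (π j)) ∧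
    ∃ l : Fin m, ∃ lam : ℝ, 0 ≤ lam ∧ lam ≤ 1 ∧
      (∀ i, i < l → w (π i) = 1) ∧ w (π l) = lam ∧ (∀ i, l < i → w (π i) = 0)

/-- Envy-freeness with respect to `(a, b)`. -/
def EnvyFree {m : ℕ} (a b w : Fin m → ℝ) : Prop :=
  (∑ i, a i * (1 - w i)) ≤ (∑ i, a i * w i) ∧ (∑ i, b i * w i) ≤ (∑ i, b i * (1 - w i))

/-- Maxmin allocation: maximizes the minimum utility over the two players. -/
def Maxmin {m : ℕ} (a b w : Fin m → ℝ) : Prop :=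
  ∀ w' : Fin m → ℝ, IsAlloc w' → min (uA a w') (uB b w') ≤ min (uA a w) (uB b w)

/-- any envy-free and Pareto optimal allocation `w` attains at
least `3/4` of the social welfare of any equitable allocation `w*`. -/
theorem envyFree_paretoOptimal_welfare_bound (m : ℕ) (hm : 1 ≤ m)
    (a b w wstar : Fin m → ℝ) (ha : IsValuation a) (hb : IsValuation b)
    (hw : IsAlloc w) (hwstar : IsAlloc wstar)
    (hEF : EnvyFree a b w) (hPO : ParetoOptimal a b w)
    (hEq : Equitable a b wstar) :
    3 / 4 * (uA a wstar + uB b wstar) ≤ uA a w + uB b w := by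
  obtain ⟨hapos, hasum⟩ := ha
  obtain ⟨hbpos, hbsum⟩ := hb
  set x := uA a w with hx
  set y := uB b w with hy
  set t := uA a wstar with ht
  -- rewrite the envy-free conditions
  have hsplitA : (∑ i, a i * (1 - w i)) = 1 - x := by
    have h1 : (∑ i, a i * (1 - w i)) = (∑ i, a i) - ∑ i, a i * w i := by
      simp [mul_sub, Finset.sum_sub_distrib]
    rw [h1, hasum, hx, uA]
  have hsplitB : (∑ i, b i * w i) = 1 - y := by
    have : (∑ i, b i * (1 - w i)) = (∑ i, b i) - ∑ i, b i * w i := by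
      simp [mul_sub, Finset.sum_sub_distrib]
    have hy' : y = 1 - ∑ i, b i * w i := by
      rw [hy, uB, this, hbsum]
    linarith
  have hx2 : (1 : ℝ) / 2 ≤ x := by
    have := hEF.1
    rw [hsplitA] at this
    have hux : (∑ i, a i * w i) = x := rfl
    linarith [this]
  have hy2 : (1 : ℝ) / 2 ≤ y := by
    have := hEF.2
    rw [hsplitB] at this
    have h2 : (∑ i, b i * (1 - w i)) = y := rfl
    linarith
  -- t ≤ 1
  have ht1 : t ≤ 1 := by
    rw [ht, uA, ← hasum]
    apply Finset.sum_le_sum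
    intro i _
    have := (hwstar i).2
    nlinarith [hapos i, (hwstar i).1]
  -- t ≤ max x y via Pareto optimality against wstar
  have htmax : t ≤ x ∨ t ≤ y := by
    by_contra h
    push_neg at h
    exact hPO ⟨wstar, hwstar, le_of_lt h.1, by rw [← hEq]; exact le_of_lt h.2,
      Or.inl h.1⟩
  have hEq' : uB b wstar = t := hEq.symm
  rw [hEq']
  rcases htmax with h | h <;> linarith
end

section
/- The factor 3/4 is tight: for every δ > 0 there exist a number of items m (m = 2 suffices), valuation vectors (a, b), an allocation w that is envy-free and Pareto optimal with respect to (a, b), and an allocation w* that is equitable and Pareto optimal with respect to (a, b), such that u_a(w) + u_b(w) ≤ (3/4 + δ) · (u_a(w*) + u_b(w*)). -/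
open Finset

/-- the factor `3/4` is tight: for every `δ > 0` there are (with
`m = 2` items) valuations `(a, b)`, an envy-free and Pareto optimal allocation
`w`, and an equitable and Pareto optimal allocation `w*`, with
`SW(w) ≤ (3/4 + δ) · SW(w*)`. -/
theorem welfare_bound_tight (δ : ℝ) (hδ : 0 < δ) :
    ∃ a b w wstar : Fin 2 → ℝ, IsValuation a ∧ IsValuation b ∧
      IsAlloc w ∧ IsAlloc wstar ∧
      EnvyFree a b w ∧ ParetoOptimal a b w ∧
      Equitable a b wstar ∧ ParetoOptimal a b wstar ∧
      uA a w + uB b w ≤ (3 / 4 + δ) * (uA a wstar + uB b wstar) := by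
  set ε : ℝ := min δ (1/4) with hεdef
  have hε0 : 0 < ε := lt_min hδ (by norm_num)
  have hε4 : ε ≤ 1/4 := min_le_right _ _
  have hεδ : ε ≤ δ := min_le_left _ _
  have h1ε : (0:ℝ) < 1 - ε := by linarith
  set t : ℝ := 1/(2*(1-ε)) with htdef
  have ht0 : 0 < t := by positivity
  have hkey : (1-ε) * t = 1/2 := by
    rw [htdef]; field_simp
  have ht1 : t ≤ 2/3 := by
    rw [htdef, div_le_div_iff₀ (by linarith) (by norm_num)]; nlinarith
  refine ⟨![1-ε, ε], ![ε, 1-ε], ![t, 0], ![1, 0], ?_, ?_, ?_, ?_, ?_, ?_, ?_, ?_, ?_⟩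
  · exact ⟨fun i => by fin_cases i <;> simp <;> linarith,
      by simp [Fin.sum_univ_two]⟩
  · exact ⟨fun i => by fin_cases i <;> simp <;> linarith,
      by simp [Fin.sum_univ_two]⟩
  · intro i; fin_cases i <;> simp <;> exact ⟨by linarith, by linarith⟩
  · intro i; fin_cases i <;> norm_num
  · constructor
    · simp [Fin.sum_univ_two]; nlinarith
    · simp [Fin.sum_univ_two]; nlinarith
  · rintro ⟨w', hw', hA, hB, hS⟩
    simp only [uA, uB, Fin.sum_univ_two, Matrix.cons_val_zero, Matrix.cons_val_one,
      Matrix.head_cons] at hA hB hS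
    obtain ⟨h00, h01⟩ := hw' 0
    obtain ⟨h10, h11⟩ := hw' 1
    have hw1 : w' 1 = 0 := by nlinarith [mul_le_mul_of_nonneg_left hA hε0.le,
      mul_le_mul_of_nonneg_left hB h1ε.le]
    have hw0 : w' 0 = t := by nlinarith
    rcases hS with h | h <;> rw [hw0, hw1] at h <;> linarith
  · simp [Equitable, uA, uB, Fin.sum_univ_two]
  · rintro ⟨w', hw', hA, hB, hS⟩
    simp only [uA, uB, Fin.sum_univ_two, Matrix.cons_val_zero, Matrix.cons_val_one,
      Matrix.head_cons] at hA hB hS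
    obtain ⟨h00, h01⟩ := hw' 0
    obtain ⟨h10, h11⟩ := hw' 1
    have hw1 : w' 1 = 0 := by nlinarith [mul_le_mul_of_nonneg_left hA hε0.le,
      mul_le_mul_of_nonneg_left hB h1ε.le]
    have hw0 : w' 0 = 1 := by nlinarith
    rcases hS with h | h <;> rw [hw0, hw1] at h <;> linarith
  · simp only [uA, uB, Fin.sum_univ_two, Matrix.cons_val_zero, Matrix.cons_val_one,
      Matrix.head_cons]
    have hεsmall : ε * (3/2 + 2*δ) ≤ 2 * δ := by
      rcases le_or_gt δ (1/4) with h | h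
      · have : ε = δ := by rw [hεdef, min_eq_left]; linarith
        nlinarith
      · have : ε = 1/4 := by rw [hεdef, min_eq_right]; linarith
        nlinarith
    nlinarith
end
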